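/- arXiv:2604.18352 — 2 statements merged into one kernel-verified Lean document; each statement's English description precedes it below -/
import Mathlib

section
/- For the shifted Gaussian pair P = N(0, σ²) and Q = N(Δ, σ²) with Δ, σ > 0, the tradeoff function satisfies T(P, Q)(α) = Φ(Φ^{-1}(1 − α) − Δ/σ) for all α ∈ (0,1). -/
open MeasureTheory ProbabilityTheory Real Set
open scoped NNReal ENNReal

/-- Standard normal CDF. -/
noncomputable def Phi (x : ℝ) : ℝ := ((gaussianReal 0 1) (Set.Iic x)).toReal

/-- Inverse of the standard normal CDF (on (0,1)). -/
noncomputable def PhiInv (p : ℝ) : ℝ := sInf {x : ℝ | p ≤ Phi x}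

/-- Gaussian tradeoff function `G_μ`, extended by `G_μ(0)=1`, `G_μ(1)=0`. -/
noncomputable def Gmu (μ α : ℝ) : ℝ :=
  if α ≤ 0 then 1 else if 1 ≤ α then 0 else Phi (PhiInv (1 - α) - μ)

/-- Optimal hypothesis-testing tradeoff function: minimal type-II error over
randomized tests with type-I error at most `α`. -/
noncomputable def tradeoff {Ω : Type*} [MeasurableSpace Ω] (P Q : Measure Ω) (α : ℝ) : ℝ :=
  sInf { b : ℝ | ∃ φ : Ω → ℝ, Measurable φ ∧ (∀ ω, φ ω ∈ Set.Icc (0:ℝ) 1) ∧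
    (∫ ω, φ ω ∂P) ≤ α ∧ b = 1 - ∫ ω, φ ω ∂Q }

/-- Rényi divergence of order `a > 1`. -/
noncomputable def renyiDiv {Ω : Type*} [MeasurableSpace Ω] (a : ℝ) (P Q : Measure Ω) : ℝ :=
  (a - 1)⁻¹ * Real.log (∫ ω, ((Measure.rnDeriv P Q ω).toReal) ^ a ∂Q)

/-- `(ε,δ)`-differential privacy. -/
def IsDP {X Ω : Type*} [MeasurableSpace Ω] (M : X → Measure Ω) (Neighbor : X → X → Prop)
    (ε δ : ℝ) : Prop :=
  ∀ x x', Neighbor x x' → ∀ S : Set Ω, MeasurableSet S →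
    ((M x) S).toReal ≤ Real.exp ε * ((M x') S).toReal + δ

/-- `ρ`-zero-concentrated differential privacy. -/
def IsZCDP {X Ω : Type*} [MeasurableSpace Ω] (M : X → Measure Ω) (Neighbor : X → X → Prop)
    (ρ : ℝ) : Prop :=
  ∀ x x', Neighbor x x' → ∀ a : ℝ, 1 < a → renyiDiv a (M x) (M x') ≤ ρ * a

/-- `μ`-Gaussian differential privacy. -/
def IsGDP {X Ω : Type*} [MeasurableSpace Ω] (M : X → Measure Ω) (Neighbor : X → X → Prop)
    (μ : ℝ) : Prop :=
  ∀ x x', Neighbor x x' → ∀ α ∈ Set.Icc (0:ℝ) 1, Gmu μ α ≤ tradeoff (M x) (M x') α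

lemma Phi_eq_integral (x : ℝ) : Phi x = ∫ t in Iic x, gaussianPDFReal 0 1 t := by
  rw [Phi, gaussianReal_apply_eq_integral 0 one_ne_zero,
    ENNReal.toReal_ofReal (setIntegral_nonneg measurableSet_Iic
      (fun t _ => gaussianPDFReal_nonneg 0 1 t))]

lemma Phi_le_one (x : ℝ) : Phi x ≤ 1 := by
  rw [Phi]
  have := prob_le_one (μ := gaussianReal 0 1) (s := Iic x)
  exact ENNReal.toReal_le_of_le_ofReal one_pos.le (by simpa using this)

lemma Phi_sub_Phi {a b : ℝ} (hab : a ≤ b) :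
    Phi b - Phi a = ∫ t in Ioc a b, gaussianPDFReal 0 1 t := by
  have hint : IntegrableOn (gaussianPDFReal 0 1) (Ioc a b) volume :=
    (integrable_gaussianPDFReal 0 1).integrableOn
  have hint2 : IntegrableOn (gaussianPDFReal 0 1) (Iic a) volume :=
    (integrable_gaussianPDFReal 0 1).integrableOn
  rw [Phi_eq_integral, Phi_eq_integral, ← Iic_union_Ioc_eq_Iic hab,
    setIntegral_union (Iic_disjoint_Ioc le_rfl) measurableSet_Ioc hint2 hint]
  ring

lemma Phi_strictMono : StrictMono Phi := by
  intro a b hab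
  have h : 0 < ∫ t in Ioc a b, gaussianPDFReal 0 1 t := by
    rw [← intervalIntegral.integral_of_le hab.le]
    refine intervalIntegral.intervalIntegral_pos_of_pos_on
      ((integrable_gaussianPDFReal 0 1).intervalIntegrable)
      (fun x _ => gaussianPDFReal_pos 0 1 x one_ne_zero) hab
  have := Phi_sub_Phi hab.le
  linarith

lemma Phi_mono : Monotone Phi := Phi_strictMono.monotone

lemma gaussianPDFReal_le (t : ℝ) : gaussianPDFReal 0 1 t ≤ (√(2 * π))⁻¹ := by
  rw [gaussianPDFReal]
  have h1 : rexp (-(t - 0) ^ 2 / (2 * (1:ℝ≥0))) ≤ 1 := by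
    rw [Real.exp_le_one_iff]
    have : (0:ℝ) ≤ (t - 0)^2 := sq_nonneg _
    have h2 : (0:ℝ) < 2 * ((1:ℝ≥0):ℝ) := by norm_num
    exact div_nonpos_of_nonpos_of_nonneg (by linarith) h2.le
  calc (√(2 * π * (1:ℝ≥0)))⁻¹ * rexp (-(t - 0) ^ 2 / (2 * (1:ℝ≥0)))
      ≤ (√(2 * π * (1:ℝ≥0)))⁻¹ * 1 := by
        refine mul_le_mul_of_nonneg_left h1 ?_
        positivity
    _ = (√(2 * π))⁻¹ := by norm_num

lemma Phi_lipschitz {a b : ℝ} (hab : a ≤ b) : Phi b - Phi a ≤ (√(2 * π))⁻¹ * (b - a) := by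
  rw [Phi_sub_Phi hab]
  have : ∫ t in Ioc a b, gaussianPDFReal 0 1 t ≤ ∫ t in Ioc a b, (√(2 * π))⁻¹ := by
    refine setIntegral_mono_on (integrable_gaussianPDFReal 0 1).integrableOn
      (integrableOn_const measure_Ioc_lt_top.ne) measurableSet_Ioc
      (fun x _ => gaussianPDFReal_le x)
  calc ∫ t in Ioc a b, gaussianPDFReal 0 1 t ≤ ∫ t in Ioc a b, (√(2 * π))⁻¹ := this
    _ = (√(2 * π))⁻¹ * (b - a) := by
        rw [setIntegral_const, measureReal_def, Real.volume_Ioc, ENNReal.toReal_ofReal (by linarith),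
          smul_eq_mul]
        ring

lemma Phi_continuous : Continuous Phi := by
  have : LipschitzWith ⟨(√(2 * π))⁻¹, by positivity⟩ Phi := by
    refine LipschitzWith.of_dist_le_mul fun x y => ?_
    rcases le_total x y with h | h
    · rw [Real.dist_eq, Real.dist_eq, abs_of_nonpos (by have := Phi_mono h; linarith),
        abs_of_nonpos (by linarith)]
      have := Phi_lipschitz h
      change _ ≤ (√(2 * π))⁻¹ * _
      linarith
    · rw [Real.dist_eq, Real.dist_eq, abs_of_nonneg (by have := Phi_mono h; linarith),
        abs_of_nonneg (by linarith)]
      have := Phi_lipschitz h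
      change _ ≤ (√(2 * π))⁻¹ * _
      linarith
  exact this.continuous

lemma Phi_tendsto_atTop : Filter.Tendsto Phi Filter.atTop (nhds 1) := by
  have h := tendsto_measure_Iic_atTop (μ := gaussianReal 0 1)
  rw [measure_univ] at h
  have := (ENNReal.tendsto_toReal (by norm_num : (1:ℝ≥0∞) ≠ ⊤)).comp h
  exact this

lemma Phi_tendsto_atBot : Filter.Tendsto Phi Filter.atBot (nhds 0) := by
  have h := tendsto_measure_Ici_atBot (μ := gaussianReal 0 1)
  rw [measure_univ] at h
  have h2 := (ENNReal.tendsto_toReal (by norm_num : (1:ℝ≥0∞) ≠ ⊤)).comp h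
  have h3 : Filter.Tendsto (fun x : ℝ => ((gaussianReal 0 1) (Ici (x+1))).toReal)
      Filter.atBot (nhds 1) := h2.comp (Filter.tendsto_atBot_add_const_right _ 1 Filter.tendsto_id)
  have h4 : Filter.Tendsto (fun x : ℝ => 1 - ((gaussianReal 0 1) (Ici (x+1))).toReal)
      Filter.atBot (nhds 0) := by
    simpa using (tendsto_const_nhds (x := (1:ℝ)) (f := Filter.atBot)).sub h3
  refine squeeze_zero (fun x => ENNReal.toReal_nonneg) (fun x => ?_) h4
  have hsub : Ici (x + 1) ⊆ (Iic x)ᶜ := fun y hy => by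
    simp only [mem_compl_iff, mem_Iic, not_le]
    exact lt_of_lt_of_le (by linarith) hy
  have hc : (gaussianReal 0 1) (Ici (x+1)) ≤ (gaussianReal 0 1) ((Iic x)ᶜ) := measure_mono hsub
  have hcompl : ((gaussianReal 0 1) ((Iic x)ᶜ)).toReal = 1 - Phi x := by
    rw [measure_compl measurableSet_Iic (measure_ne_top _ _), measure_univ, Phi,
      ENNReal.toReal_sub_of_le (by simpa using prob_le_one) (by norm_num)]
    simp
  have := ENNReal.toReal_mono (measure_ne_top _ _) hc
  rw [hcompl] at this
  linarith

lemma Phi_pos (x : ℝ) : 0 < Phi x := by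
  have h0 : 0 ≤ Phi (x - 1) := ENNReal.toReal_nonneg
  have := Phi_strictMono (show x - 1 < x by linarith)
  linarith

lemma Phi_lt_one (x : ℝ) : Phi x < 1 := by
  have := Phi_strictMono (show x < x + 1 by linarith)
  have := Phi_le_one (x + 1)
  linarith

lemma exists_Phi_eq {p : ℝ} (h0 : 0 < p) (h1 : p < 1) : ∃ x, Phi x = p := by
  obtain ⟨a, ha⟩ := (Phi_tendsto_atBot.eventually (eventually_lt_nhds h0)).exists
  obtain ⟨b, hb⟩ := (Phi_tendsto_atTop.eventually (eventually_gt_nhds h1)).exists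
  obtain ⟨x, _, hx⟩ := intermediate_value_Icc (le_of_lt (by
      by_contra hc
      push_neg at hc
      exact absurd (Phi_mono hc) (by linarith))) Phi_continuous.continuousOn
    (show p ∈ Icc (Phi a) (Phi b) from ⟨ha.le, hb.le⟩)
  exact ⟨x, hx⟩

lemma PhiInv_eq {p x : ℝ} (hx : Phi x = p) : PhiInv p = x := by
  rw [PhiInv]
  have hmem : x ∈ {y : ℝ | p ≤ Phi y} := by simp [hx.ge]
  refine le_antisymm (csInf_le ⟨x, fun y hy => ?_⟩ hmem) (le_csInf ⟨x, hmem⟩ fun y hy => ?_)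
  · by_contra hc
    push_neg at hc
    exact absurd (hx ▸ hy) (not_le.2 (Phi_strictMono hc))
  · by_contra hc
    push_neg at hc
    exact absurd (hx ▸ hy) (not_le.2 (Phi_strictMono hc))

lemma Phi_PhiInv {p : ℝ} (h0 : 0 < p) (h1 : p < 1) : Phi (PhiInv p) = p := by
  obtain ⟨x, hx⟩ := exists_Phi_eq h0 h1
  rw [PhiInv_eq hx, hx]

lemma gaussianReal_eq_map_std {σ : ℝ} (hσ : 0 < σ) (m : ℝ) :
    gaussianReal m ((σ^2).toNNReal)
      = (gaussianReal 0 1).map (fun x => σ * x + m) := by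
  have h1 : (gaussianReal 0 1).map (σ * ·) = gaussianReal 0 ((σ^2).toNNReal) := by
    rw [gaussianReal_map_const_mul]
    congr 1
    · ring
    · ext
      simp [Real.coe_toNNReal _ (sq_nonneg σ)]
  have h2 : (gaussianReal 0 ((σ^2).toNNReal)).map (· + m)
      = gaussianReal m ((σ^2).toNNReal) := by
    rw [gaussianReal_map_add_const, zero_add]
  rw [← h2, ← h1, Measure.map_map (measurable_add_const m) (measurable_const_mul σ)]
  rfl

lemma gaussianReal_Iic {σ : ℝ} (hσ : 0 < σ) (m t : ℝ) :
    ((gaussianReal m ((σ^2).toNNReal)) (Iic t)).toReal = Phi ((t - m)/σ) := by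
  rw [gaussianReal_eq_map_std hσ m,
    Measure.map_apply (by fun_prop) measurableSet_Iic]
  congr 2
  ext x
  simp only [mem_preimage, mem_Iic]
  rw [le_div_iff₀ hσ]
  constructor <;> intro h <;> nlinarith

lemma integral_gaussianReal {σ : ℝ} (hσ : 0 < σ) (m : ℝ) (g : ℝ → ℝ) :
    ∫ x, g x ∂(gaussianReal m ((σ^2).toNNReal))
      = ∫ x, gaussianPDFReal m ((σ^2).toNNReal) x * g x := by
  have hv : ((σ^2).toNNReal) ≠ 0 := by
    simp only [ne_eq, Real.toNNReal_eq_zero, not_le]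
    positivity
  rw [gaussianReal_of_var_ne_zero _ hv]
  have hd : (gaussianPDF m ((σ^2).toNNReal))
      = fun x => ((gaussianPDFReal m ((σ^2).toNNReal) x).toNNReal : ℝ≥0∞) := rfl
  rw [hd, integral_withDensity_eq_integral_smul
    ((measurable_gaussianPDFReal _ _).real_toNNReal) g]
  congr 1
  ext x
  rw [NNReal.smul_def, smul_eq_mul, Real.coe_toNNReal _ (gaussianPDFReal_nonneg _ _ _)]

lemma ratio_mono {Δ σ : ℝ} (hΔ : 0 < Δ) (hσ : 0 < σ) {x y : ℝ} (hxy : x ≤ y) :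
    gaussianPDFReal Δ ((σ^2).toNNReal) x * gaussianPDFReal 0 ((σ^2).toNNReal) y
      ≤ gaussianPDFReal Δ ((σ^2).toNNReal) y * gaussianPDFReal 0 ((σ^2).toNNReal) x := by
  have hV : (((σ^2).toNNReal : ℝ≥0) : ℝ) = σ^2 := Real.coe_toNNReal _ (sq_nonneg σ)
  have hVpos : (0:ℝ) < (((σ^2).toNNReal : ℝ≥0) : ℝ) := by rw [hV]; positivity
  simp only [gaussianPDFReal]
  set c : ℝ := (√(2 * π * ((σ^2).toNNReal : ℝ≥0)))⁻¹ with hc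
  have hcpos : 0 < c := by rw [hc]; positivity
  set V : ℝ := (((σ^2).toNNReal : ℝ≥0) : ℝ)
  calc c * rexp (-(x - Δ) ^ 2 / (2 * V)) * (c * rexp (-(y - 0) ^ 2 / (2 * V)))
      = c * c * rexp (-(x - Δ) ^ 2 / (2 * V) + -(y - 0) ^ 2 / (2 * V)) := by
        rw [Real.exp_add]; ring
    _ ≤ c * c * rexp (-(y - Δ) ^ 2 / (2 * V) + -(x - 0) ^ 2 / (2 * V)) := by
        refine mul_le_mul_of_nonneg_left ?_ (by positivity)
        rw [Real.exp_le_exp, ← add_div, ← add_div]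
        refine div_le_div_of_nonneg_right ?_ (by positivity) |>.trans_eq rfl
        nlinarith [mul_le_mul_of_nonneg_left hxy hΔ.le]
    _ = c * rexp (-(y - Δ) ^ 2 / (2 * V)) * (c * rexp (-(x - 0) ^ 2 / (2 * V))) := by
        rw [Real.exp_add]; ring

lemma neyman_pearson {Δ σ : ℝ} (hΔ : 0 < Δ) (hσ : 0 < σ) (t : ℝ) (φ : ℝ → ℝ)
    (hφm : Measurable φ) (hφ01 : ∀ x, φ x ∈ Icc (0:ℝ) 1)
    (hα : ∫ x, φ x ∂(gaussianReal 0 ((σ^2).toNNReal))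
      ≤ ((gaussianReal 0 ((σ^2).toNNReal)) (Ioi t)).toReal) :
    ∫ x, φ x ∂(gaussianReal Δ ((σ^2).toNNReal))
      ≤ ((gaussianReal Δ ((σ^2).toNNReal)) (Ioi t)).toReal := by
  set v : ℝ≥0 := (σ^2).toNNReal with hvdef
  set p : ℝ → ℝ := gaussianPDFReal 0 v with hp
  set q : ℝ → ℝ := gaussianPDFReal Δ v with hq
  have hvne : v ≠ 0 := by
    simp only [hvdef, ne_eq, Real.toNNReal_eq_zero, not_le]; positivity
  have hppos : ∀ x, 0 < p x := fun x => gaussianPDFReal_pos _ _ _ hvne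
  have hqpos : ∀ x, 0 < q x := fun x => gaussianPDFReal_pos _ _ _ hvne
  set ψ : ℝ → ℝ := (Ioi t).indicator 1 with hψ
  have hψm : Measurable ψ := measurable_const.indicator measurableSet_Ioi
  have hψ01 : ∀ x, ψ x ∈ Icc (0:ℝ) 1 := by
    intro x
    by_cases hx : x ∈ Ioi t <;> simp [hψ, hx]
  set κ : ℝ := q t / p t with hκ
  have hκpos : 0 < κ := div_pos (hqpos t) (hppos t)
  -- integral of ψ equals the measure of Ioi t
  have hψP : ∫ x, ψ x ∂(gaussianReal 0 v) = ((gaussianReal 0 v) (Ioi t)).toReal :=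
    integral_indicator_one measurableSet_Ioi
  have hψQ : ∫ x, ψ x ∂(gaussianReal Δ v) = ((gaussianReal Δ v) (Ioi t)).toReal :=
    integral_indicator_one measurableSet_Ioi
  -- integrability
  have hφP : Integrable φ (gaussianReal 0 v) := by
    refine Integrable.mono' (integrable_const 1) hφm.aestronglyMeasurable ?_
    exact ae_of_all _ fun x => by
      rw [Real.norm_eq_abs, abs_of_nonneg (hφ01 x).1]; exact (hφ01 x).2
  have hφQ : Integrable φ (gaussianReal Δ v) := by
    refine Integrable.mono' (integrable_const 1) hφm.aestronglyMeasurable ?_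
    exact ae_of_all _ fun x => by
      rw [Real.norm_eq_abs, abs_of_nonneg (hφ01 x).1]; exact (hφ01 x).2
  have hψP' : Integrable ψ (gaussianReal 0 v) := by
    refine Integrable.mono' (integrable_const 1) hψm.aestronglyMeasurable ?_
    exact ae_of_all _ fun x => by
      rw [Real.norm_eq_abs, abs_of_nonneg (hψ01 x).1]; exact (hψ01 x).2
  have hψQ' : Integrable ψ (gaussianReal Δ v) := by
    refine Integrable.mono' (integrable_const 1) hψm.aestronglyMeasurable ?_
    exact ae_of_all _ fun x => by
      rw [Real.norm_eq_abs, abs_of_nonneg (hψ01 x).1]; exact (hψ01 x).2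
  have habs : ∀ x, |ψ x - φ x| ≤ 1 := by
    intro x
    have h1 := hφ01 x
    have h2 := hψ01 x
    rw [abs_le]
    constructor <;> [skip; skip] <;> simp only [mem_Icc] at h1 h2 <;> linarith [h1.1, h1.2, h2.1, h2.2]
  have hqint : Integrable (fun x => q x * (ψ x - φ x)) volume := by
    refine Integrable.mono' (integrable_gaussianPDFReal Δ v)
      ((measurable_gaussianPDFReal Δ v).mul (hψm.sub hφm)).aestronglyMeasurable ?_
    refine ae_of_all _ fun x => ?_
    rw [Real.norm_eq_abs, abs_mul, abs_of_nonneg (hqpos x).le]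
    calc q x * |ψ x - φ x| ≤ q x * 1 := by
          exact mul_le_mul_of_nonneg_left (habs x) (hqpos x).le
      _ = q x := mul_one _
  have hpint : Integrable (fun x => p x * (ψ x - φ x)) volume := by
    refine Integrable.mono' (integrable_gaussianPDFReal 0 v)
      ((measurable_gaussianPDFReal 0 v).mul (hψm.sub hφm)).aestronglyMeasurable ?_
    refine ae_of_all _ fun x => ?_
    rw [Real.norm_eq_abs, abs_mul, abs_of_nonneg (hppos x).le]
    calc p x * |ψ x - φ x| ≤ p x * 1 := by
          exact mul_le_mul_of_nonneg_left (habs x) (hppos x).le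
      _ = p x := mul_one _
  -- pointwise Neyman-Pearson inequality
  have hpoint : ∀ x, κ * (p x * (ψ x - φ x)) ≤ q x * (ψ x - φ x) := by
    intro x
    rcases lt_or_ge t x with hx | hx
    · have hψx : ψ x = 1 := by simp [hψ, hx]
      have ha : 0 ≤ ψ x - φ x := by rw [hψx]; linarith [(hφ01 x).2]
      have hratio : q t * p x ≤ q x * p t := ratio_mono hΔ hσ hx.le
      have : κ * p x ≤ q x := by
        rw [hκ, div_mul_eq_mul_div, div_le_iff₀ (hppos t)]
        nlinarith
      nlinarith
    · have hψx : ψ x = 0 := by simp [hψ, not_lt.2 hx]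
      have ha : ψ x - φ x ≤ 0 := by rw [hψx]; linarith [(hφ01 x).1]
      have hratio : q x * p t ≤ q t * p x := ratio_mono hΔ hσ hx
      have : q x ≤ κ * p x := by
        rw [hκ, div_mul_eq_mul_div, le_div_iff₀ (hppos t)]
        nlinarith
      nlinarith
  -- put it together
  have key : κ * ∫ x, (ψ x - φ x) ∂(gaussianReal 0 v)
      ≤ ∫ x, (ψ x - φ x) ∂(gaussianReal Δ v) := by
    have hQ : ∫ x, (ψ x - φ x) ∂(gaussianReal Δ v) = ∫ x, q x * (ψ x - φ x) := by
      exact integral_gaussianReal hσ Δ _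
    have hP : ∫ x, (ψ x - φ x) ∂(gaussianReal 0 v) = ∫ x, p x * (ψ x - φ x) := by
      exact integral_gaussianReal hσ 0 _
    rw [hQ, hP, ← integral_const_mul]
    exact integral_mono (hpint.const_mul κ) hqint hpoint
  have hsubP : ∫ x, (ψ x - φ x) ∂(gaussianReal 0 v)
      = ((gaussianReal 0 v) (Ioi t)).toReal - ∫ x, φ x ∂(gaussianReal 0 v) := by
    rw [integral_sub hψP' hφP, hψP]
  have hsubQ : ∫ x, (ψ x - φ x) ∂(gaussianReal Δ v)
      = ((gaussianReal Δ v) (Ioi t)).toReal - ∫ x, φ x ∂(gaussianReal Δ v) := by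
    rw [integral_sub hψQ' hφQ, hψQ]
  rw [hsubP] at key
  rw [hsubQ] at key
  nlinarith

lemma prob_Ioi_toReal (μ : Measure ℝ) [IsProbabilityMeasure μ] (t : ℝ) :
    (μ (Ioi t)).toReal = 1 - (μ (Iic t)).toReal := by
  rw [← compl_Iic, measure_compl measurableSet_Iic (measure_ne_top _ _), measure_univ,
    ENNReal.toReal_sub_of_le (by simpa using prob_le_one) (by norm_num)]
  simp


/-- Tradeoff function of a shifted Gaussian pair:
`T(N(0,σ²), N(Δ,σ²))(α) = Φ(Φ⁻¹(1-α) - Δ/σ)` for `α ∈ (0,1)`. -/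
theorem tradeoff_shifted_gaussian (Δ σ : ℝ) (hΔ : 0 < Δ) (hσ : 0 < σ) :
    ∀ α ∈ Set.Ioo (0:ℝ) 1,
      tradeoff (gaussianReal 0 ((σ ^ 2).toNNReal)) (gaussianReal Δ ((σ ^ 2).toNNReal)) α
        = Phi (PhiInv (1 - α) - Δ / σ) := by
  intro α hα
  obtain ⟨hα0, hα1⟩ := hα
  have h1α0 : 0 < 1 - α := by linarith
  have h1α1 : 1 - α < 1 := by linarith
  set v : ℝ≥0 := (σ ^ 2).toNNReal with hvdef
  set P : Measure ℝ := gaussianReal 0 v with hP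
  set Q : Measure ℝ := gaussianReal Δ v with hQ
  set u : ℝ := PhiInv (1 - α) with hu
  set t : ℝ := σ * u with ht
  set β : ℝ := Phi (PhiInv (1 - α) - Δ / σ) with hβ
  -- CDF computations
  have htσ : (t - 0) / σ = u := by rw [ht]; field_simp; ring
  have htΔσ : (t - Δ) / σ = u - Δ / σ := by
    rw [ht, sub_div, mul_comm, mul_div_assoc, div_self hσ.ne', mul_one]
  have hPIic : (P (Iic t)).toReal = 1 - α := by
    rw [hP, gaussianReal_Iic hσ 0 t, htσ, hu, Phi_PhiInv h1α0 h1α1]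
  have hQIic : (Q (Iic t)).toReal = β := by
    rw [hQ, gaussianReal_Iic hσ Δ t, htΔσ, hβ, hu]
  have hPIoi : (P (Ioi t)).toReal = α := by
    rw [prob_Ioi_toReal, hPIic]; ring
  have hQIoi : (Q (Ioi t)).toReal = 1 - β := by
    rw [prob_Ioi_toReal, hQIic]
  -- the threshold test
  set ψ : ℝ → ℝ := (Ioi t).indicator 1 with hψ
  have hψm : Measurable ψ := measurable_const.indicator measurableSet_Ioi
  have hψ01 : ∀ x, ψ x ∈ Icc (0:ℝ) 1 := by
    intro x; by_cases hx : x ∈ Ioi t <;> simp [hψ, hx]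
  have hψP : ∫ x, ψ x ∂P = (P (Ioi t)).toReal := integral_indicator_one measurableSet_Ioi
  have hψQ : ∫ x, ψ x ∂Q = (Q (Ioi t)).toReal := integral_indicator_one measurableSet_Ioi
  have hmem : β ∈ { b : ℝ | ∃ φ : ℝ → ℝ, Measurable φ ∧ (∀ ω, φ ω ∈ Set.Icc (0:ℝ) 1) ∧
      (∫ ω, φ ω ∂P) ≤ α ∧ b = 1 - ∫ ω, φ ω ∂Q } := by
    refine ⟨ψ, hψm, hψ01, ?_, ?_⟩
    · rw [hψP, hPIoi]
    · rw [hψQ, hQIoi]; ring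
  have hlb : ∀ b ∈ { b : ℝ | ∃ φ : ℝ → ℝ, Measurable φ ∧ (∀ ω, φ ω ∈ Set.Icc (0:ℝ) 1) ∧
      (∫ ω, φ ω ∂P) ≤ α ∧ b = 1 - ∫ ω, φ ω ∂Q }, β ≤ b := by
    rintro b ⟨φ, hφm, hφ01, hφα, rfl⟩
    have := neyman_pearson hΔ hσ t φ hφm hφ01 (by rw [← hP, hPIoi]; exact hφα)
    rw [← hQ, hQIoi] at this
    linarith
  rw [tradeoff]
  exact le_antisymm (csInf_le ⟨β, hlb⟩ hmem) (le_csInf ⟨β, hmem⟩ hlb)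
end

section
/- The (ε,δ)-DP guarantee of a μ-GDP mechanism is monotone in μ: for fixed ε ≥ 0, the function μ ↦ Φ(−ε/μ + μ/2) − e^ε·Φ(−ε/μ − μ/2) is strictly increasing on (0, ∞); hence a smaller μ implies a smaller δ at every ε. -/
open MeasureTheory ProbabilityTheory Real Set

lemma Phi_eq (x : ℝ) : Phi x = ∫ t in Set.Iic x, gaussianPDFReal 0 1 t := by
  rw [Phi, gaussianReal_apply_eq_integral 0 one_ne_zero,
    ENNReal.toReal_ofReal (integral_nonneg (gaussianPDFReal_nonneg _ _))]

lemma hasDerivAt_Phi (x : ℝ) : HasDerivAt Phi (gaussianPDFReal 0 1 x) x := by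
  have hint : Integrable (gaussianPDFReal 0 1) := integrable_gaussianPDFReal 0 1
  have hcont : Continuous (gaussianPDFReal 0 1) := by
    rw [gaussianPDFReal_def]; fun_prop
  have h : Phi = fun y => Phi 0 + ∫ t in (0:ℝ)..y, gaussianPDFReal 0 1 t := by
    funext y
    rw [Phi_eq, Phi_eq, ← intervalIntegral.integral_Iic_sub_Iic hint.integrableOn hint.integrableOn]
    ring
  rw [h]
  refine HasDerivAt.const_add _ ?_
  exact intervalIntegral.integral_hasDerivAt_right hint.intervalIntegrable
    hcont.stronglyMeasurable.stronglyMeasurableAtFilter hcont.continuousAt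

lemma hasDerivAt_delta (ε : ℝ) {μ : ℝ} (hμ : 0 < μ) :
    HasDerivAt (fun μ : ℝ => Phi (-ε / μ + μ / 2) - Real.exp ε * Phi (-ε / μ - μ / 2))
      (gaussianPDFReal 0 1 (-ε / μ + μ / 2)) μ := by
  have hμ' : μ ≠ 0 := ne_of_gt hμ
  have hinner : HasDerivAt (fun x : ℝ => -ε / x) (ε / μ ^ 2) μ := by
    have h1 := (hasDerivAt_inv hμ').const_mul (-ε)
    have heq : (fun y : ℝ => -ε * y⁻¹) = fun x : ℝ => -ε / x := by
      funext x; ring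
    rw [heq] at h1
    refine h1.congr_deriv ?_
    rw [div_eq_mul_inv]; ring
  have ha : HasDerivAt (fun x : ℝ => -ε / x + x / 2) (ε / μ ^ 2 + 1 / 2) μ := by
    exact hinner.add ((hasDerivAt_id' (x := μ)).div_const (2:ℝ))
  have hb : HasDerivAt (fun x : ℝ => -ε / x - x / 2) (ε / μ ^ 2 - 1 / 2) μ := by
    exact hinner.sub ((hasDerivAt_id' (x := μ)).div_const (2:ℝ))
  have hA := (hasDerivAt_Phi (-ε / μ + μ / 2)).comp μ ha
  have hB := (hasDerivAt_Phi (-ε / μ - μ / 2)).comp μ hb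
  have h := hA.sub (hB.const_mul (Real.exp ε))
  refine h.congr_deriv ?_
  have hsq : (-ε / μ - μ / 2) ^ 2 = (-ε / μ + μ / 2) ^ 2 + 2 * ε := by
    field_simp; ring
  have hkey : Real.exp ε * gaussianPDFReal 0 1 (-ε / μ - μ / 2)
      = gaussianPDFReal 0 1 (-ε / μ + μ / 2) := by
    simp only [gaussianPDFReal, NNReal.coe_one, sub_zero, mul_one]
    rw [mul_left_comm, ← Real.exp_add]
    congr 2
    rw [hsq]
    ring
  linear_combination (1 / 2 - ε / μ ^ 2) * hkey

/-- For fixed `ε ≥ 0`, the tight `δ` of a `μ`-GDP mechanism is strictly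
increasing in `μ` on `(0, ∞)`. -/
theorem delta_strict_mono_in_mu (ε : ℝ) (hε : 0 ≤ ε) :
    StrictMonoOn
      (fun μ : ℝ => Phi (-ε / μ + μ / 2) - Real.exp ε * Phi (-ε / μ - μ / 2))
      (Set.Ioi 0) := by
  refine strictMonoOn_of_deriv_pos (convex_Ioi 0) ?_ ?_
  · intro μ hμ
    exact ((hasDerivAt_delta ε hμ).continuousAt).continuousWithinAt
  · intro μ hμ
    rw [interior_Ioi] at hμ
    rw [(hasDerivAt_delta ε hμ).deriv]
    exact gaussianPDFReal_pos _ _ _ one_ne_zero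
end
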